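/- arXiv:2307.00889 — 2 statements merged into one kernel-verified Lean document; each statement's English description precedes it below -/
import Mathlib

section
/- Let σ ⊆ ℝ³ be a strongly convex rational polyhedral cone and let u be an irreducible element of S_σ = σ ∩ ℤ³. Suppose v₁, v₂, v₃ ∈ S_σ form a ℤ-basis of ℤ³ (the matrix with columns v₁, v₂, v₃ has determinant ±1) and that u lies in the cone ⟨v₁, v₂, v₃⟩. Then u ∈ {v₁, v₂, v₃}. (Every Hilbert-basis element of σ is an extremal vector of any regular refinement of σ.) -/
open scoped BigOperators

/-- The real-coordinate vector attached to an integer vector. -/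
def toR {n : ℕ} (u : Fin n → ℤ) : Fin n → ℝ := fun j => (u j : ℝ)

/-- The rational polyhedral cone generated by integer vectors `v 0, …, v (r-1)`:
all nonnegative real linear combinations of the generators. -/
def coneOf {n r : ℕ} (v : Fin r → (Fin n → ℤ)) : Set (Fin n → ℝ) :=
  { x | ∃ c : Fin r → ℝ, (∀ i, 0 ≤ c i) ∧ x = ∑ i, c i • toR (v i) }

/-- The lattice points of a subset of `ℝⁿ`: `S_σ = σ ∩ ℤⁿ`. -/
def latticePoints {n : ℕ} (σ : Set (Fin n → ℝ)) : Set (Fin n → ℤ) :=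
  { u | toR u ∈ σ }

/-- `u` is an irreducible element of `S`: it is a nonzero element of `S` which cannot be
written as the sum of two nonzero elements of `S`. -/
def IsIrreducibleElt {n : ℕ} (S : Set (Fin n → ℤ)) (u : Fin n → ℤ) : Prop :=
  u ∈ S ∧ u ≠ 0 ∧ ∀ a b : Fin n → ℤ, a ∈ S → b ∈ S → u = a + b → a = 0 ∨ b = 0

/-- The Hilbert basis of (the monoid of lattice points of) a cone:
the set of its irreducible elements. -/
def hilbertBasis {n : ℕ} (S : Set (Fin n → ℤ)) : Set (Fin n → ℤ) :=
  { u | IsIrreducibleElt S u }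

/-- The 3×3 integer matrix with columns `a, b, c`. -/
def colMat (a b c : Fin 3 → ℤ) : Matrix (Fin 3) (Fin 3) ℤ :=
  Matrix.of fun i j => ![a, b, c] j i

lemma toR_add {n : ℕ} (x y : Fin n → ℤ) : toR (x + y) = toR x + toR y := by
  funext i; simp [toR]

lemma toR_zero {n : ℕ} : toR (0 : Fin n → ℤ) = 0 := by funext i; simp [toR]

lemma coneOf_zero_mem {n r : ℕ} (w : Fin r → (Fin n → ℤ)) : (0 : Fin n → ℝ) ∈ coneOf w :=
  ⟨0, fun _ => le_refl 0, by simp⟩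

lemma coneOf_add_mem {n r : ℕ} {w : Fin r → (Fin n → ℤ)} {x y : Fin n → ℝ}
    (hx : x ∈ coneOf w) (hy : y ∈ coneOf w) : x + y ∈ coneOf w := by
  obtain ⟨c, hc, rfl⟩ := hx
  obtain ⟨d, hd, rfl⟩ := hy
  exact ⟨c + d, fun i => add_nonneg (hc i) (hd i), by
    simp [add_smul, Finset.sum_add_distrib]⟩

lemma lattice_add {n r : ℕ} {w : Fin r → (Fin n → ℤ)} {x y : Fin n → ℤ}
    (hx : x ∈ latticePoints (coneOf w)) (hy : y ∈ latticePoints (coneOf w)) :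
    x + y ∈ latticePoints (coneOf w) := by
  simp only [latticePoints, Set.mem_setOf_eq, toR_add] at *
  exact coneOf_add_mem hx hy

lemma lattice_zero {n r : ℕ} (w : Fin r → (Fin n → ℤ)) :
    (0 : Fin n → ℤ) ∈ latticePoints (coneOf w) := by
  simp only [latticePoints, Set.mem_setOf_eq, toR_zero]
  exact coneOf_zero_mem w

lemma lattice_smul {n r : ℕ} {w : Fin r → (Fin n → ℤ)} {v : Fin n → ℤ}
    (hv : v ∈ latticePoints (coneOf w)) {m : ℤ} (hm : 0 ≤ m) :
    m • v ∈ latticePoints (coneOf w) := by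
  obtain ⟨k, rfl⟩ := Int.eq_ofNat_of_zero_le hm
  induction k with
  | zero => simpa using lattice_zero w
  | succ k ih =>
      have hk : ((k + 1 : ℕ) : ℤ) • v = ((k : ℕ) : ℤ) • v + v := by
        push_cast
        rw [add_smul, one_smul]
      rw [hk]
      exact lattice_add (ih (by positivity)) hv


/-- let `σ ⊆ ℝ³` be a strongly convex rational polyhedral cone and `u` an
irreducible element of `S_σ = σ ∩ ℤ³`.  If `v₁, v₂, v₃ ∈ S_σ` form a `ℤ`-basis of `ℤ³`
(the matrix with columns `v₁, v₂, v₃` has determinant `±1`) and `u` lies in the cone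
`⟨v₁, v₂, v₃⟩`, then `u ∈ {v₁, v₂, v₃}`. -/
theorem irreducible_is_extremal_of_regular_subcone {r : ℕ} (w : Fin r → (Fin 3 → ℤ))
    (hsc : ∀ x : Fin 3 → ℝ, x ∈ coneOf w → -x ∈ coneOf w → x = 0)
    (u v₁ v₂ v₃ : Fin 3 → ℤ)
    (hu : IsIrreducibleElt (latticePoints (coneOf w)) u)
    (h1 : v₁ ∈ latticePoints (coneOf w))
    (h2 : v₂ ∈ latticePoints (coneOf w))
    (h3 : v₃ ∈ latticePoints (coneOf w))
    (hdet : (colMat v₁ v₂ v₃).det = 1 ∨ (colMat v₁ v₂ v₃).det = -1)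
    (hcone : toR u ∈ coneOf ![v₁, v₂, v₃]) :
    u = v₁ ∨ u = v₂ ∨ u = v₃ := by
  obtain ⟨huS, hune, hirr⟩ := hu
  set M := colMat v₁ v₂ v₃ with hM
  have hdet0 : IsUnit M.det := by rcases hdet with h | h <;> simp [h]
  set a : Fin 3 → ℤ := (M⁻¹).mulVec u with ha
  have hMa : M.mulVec a = u := by
    rw [ha, Matrix.mulVec_mulVec, Matrix.mul_nonsing_inv _ hdet0, Matrix.one_mulVec]
  -- real matrix
  set MR : Matrix (Fin 3) (Fin 3) ℝ := M.map (Int.cast : ℤ → ℝ) with hMR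
  have hdetR : IsUnit MR.det := by
    have : MR.det = ((M.det : ℤ) : ℝ) := by
      rw [hMR]
      exact (RingHom.map_det (Int.castRingHom ℝ) M).symm
    rcases hdet with h | h <;> rw [hM] at * <;> simp [this, h]
  obtain ⟨c, hc0, hcu⟩ := hcone
  have hMRc : MR.mulVec c = toR u := by
    funext i
    rw [hcu]
    simp [Matrix.mulVec, dotProduct, hMR, hM, colMat, Fin.sum_univ_three, toR, mul_comm]
  have hMRa : MR.mulVec (fun i => (a i : ℝ)) = toR u := by
    funext i
    have := congrFun hMa i
    simp only [Matrix.mulVec, dotProduct, Fin.sum_univ_three] at this ⊢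
    rw [toR]
    push_cast [hMR, ← this]
    norm_num
  have hca : c = fun i => (a i : ℝ) := by
    have h1' : (MR⁻¹).mulVec (MR.mulVec c) = (MR⁻¹).mulVec (MR.mulVec fun i => (a i : ℝ)) := by
      rw [hMRc, hMRa]
    rwa [Matrix.mulVec_mulVec, Matrix.mulVec_mulVec, Matrix.nonsing_inv_mul _ hdetR,
      Matrix.one_mulVec, Matrix.one_mulVec] at h1'
  have ha0 : ∀ i, 0 ≤ a i := by
    intro i
    have := hc0 i
    rw [hca] at this
    exact_mod_cast show (0:ℝ) ≤ (a i : ℝ) by simpa using this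
  have hu_eq : u = a 0 • v₁ + a 1 • v₂ + a 2 • v₃ := by
    funext i
    have := congrFun hMa i
    simp only [Matrix.mulVec, dotProduct, Fin.sum_univ_three, hM, colMat, Matrix.of_apply,
      Matrix.cons_val_zero, Matrix.cons_val_one, Matrix.head_cons] at this
    simp only [Pi.add_apply, Pi.smul_apply, smul_eq_mul]
    rw [← this]
    simp [dotProduct, Fin.sum_univ_three]
    ring
  -- nonzero columns
  have hvne : ∀ j : Fin 3, (![v₁, v₂, v₃] j) ≠ 0 := by
    intro j hj
    have : M.det = 0 := by
      apply Matrix.det_eq_zero_of_column_eq_zero j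
      intro i
      exact congrFun hj i
    rcases hdet with h | h <;> rw [hM] at * <;> omega
  have key : ∀ (j : Fin 3) (rest : Fin 3 → ℤ), rest ∈ latticePoints (coneOf w) →
      u = ![v₁, v₂, v₃] j + rest → u = ![v₁, v₂, v₃] j := by
    intro j rest hrest heq
    rcases hirr _ _ (by fin_cases j <;> assumption) hrest heq with h | h
    · exact absurd h (hvne j)
    · rw [heq, h, add_zero]
  rcases eq_or_lt_of_le (ha0 0) with h0 | h0
  · rcases eq_or_lt_of_le (ha0 1) with h1' | h1'
    · rcases eq_or_lt_of_le (ha0 2) with h2' | h2'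
      · exfalso; apply hune; rw [hu_eq, ← h0, ← h1', ← h2']; simp
      · right; right
        refine key 2 ((a 2 - 1) • v₃) (lattice_smul h3 (by omega)) ?_
        rw [hu_eq, ← h0, ← h1']
        simp only [sub_smul, one_smul, zero_smul, Matrix.cons_val_zero, Matrix.cons_val_one, Matrix.head_cons, Matrix.cons_val_two, Matrix.tail_cons]
        abel
    · right; left
      refine key 1 ((a 1 - 1) • v₂ + a 2 • v₃)
        (lattice_add (lattice_smul h2 (by omega)) (lattice_smul h3 (ha0 2))) ?_
      rw [hu_eq, ← h0]
      simp only [sub_smul, one_smul, zero_smul, Matrix.cons_val_zero, Matrix.cons_val_one, Matrix.head_cons, Matrix.cons_val_two, Matrix.tail_cons]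
      abel
  · left
    refine key 0 ((a 0 - 1) • v₁ + a 1 • v₂ + a 2 • v₃)
      (lattice_add (lattice_add (lattice_smul h1 (by omega)) (lattice_smul h2 (ha0 1)))
        (lattice_smul h3 (ha0 2))) ?_
    rw [hu_eq]
    simp only [sub_smul, one_smul, zero_smul, Matrix.cons_val_zero, Matrix.cons_val_one, Matrix.head_cons, Matrix.cons_val_two, Matrix.tail_cons]
    abel
end

section
/- Let n ≥ 2 and r ≥ 1 be integers and let σ₃ = ⟨(0,1,0),(0,1,2),(2,2n+3,0),(2,2n+3,2r)⟩ ⊆ ℝ³ (a maximal cone of the dual Newton polyhedron of the B₍₂ᵣ₋₁,ₙ₎-singularity x^{2n+3}z − x^r y² − y²z = 0). Then the Hilbert basis of σ₃ is exactly { (0,1,0), (0,1,1), (0,1,2) } ∪ { (1,n+2,j) : 0 ≤ j ≤ r+1 } ∪ { (2,2n+3,j) : 0 ≤ j ≤ 2r }. Moreover, the linear form l(x,y,z) = y − (n+1)x takes the value 1 on each generator of σ₃ and takes the value 1 on every element of this Hilbert basis. -/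
open scoped BigOperators

/-- The inequality description of the cone `σ₃`. -/
def crit (n r : ℤ) (u : Fin 3 → ℤ) : Prop :=
  0 ≤ u 0 ∧ 0 ≤ u 2 ∧ (2*n+3) * u 0 ≤ 2 * u 1 ∧ u 2 ≤ 2 * u 1 - (2*n+3) * u 0 + r * u 0

lemma eta3 (u : Fin 3 → ℤ) : u = ![u 0, u 1, u 2] := by
  funext j; fin_cases j <;> rfl

lemma mem_S_iff (n r : ℤ) (hr : 1 ≤ r) (u : Fin 3 → ℤ) :
    u ∈ latticePoints (coneOf ![![0,1,0],![0,1,2],![2,2*n+3,0],![2,2*n+3,2*r]]) ↔ crit n r u := by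
  have hrr : (1:ℝ) ≤ (r:ℝ) := by exact_mod_cast hr
  have hr' : (0:ℝ) < 2 * r := by linarith
  constructor
  · rintro ⟨c, hc, hx⟩
    have h0 := congrFun hx 0
    have h1 := congrFun hx 1
    have h2 := congrFun hx 2
    simp [toR, Fin.sum_univ_four, Matrix.vecHead, Matrix.vecTail] at h0 h1 h2
    have c0 := hc 0; have c1 := hc 1; have c2 := hc 2; have c3 := hc 3
    refine ⟨?_, ?_, ?_, ?_⟩
    · have : (0:ℝ) ≤ (u 0 : ℝ) := by rw [h0]; nlinarith
      exact_mod_cast this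
    · have : (0:ℝ) ≤ (u 2 : ℝ) := by rw [h2]; nlinarith
      exact_mod_cast this
    · have h : ((2*n+3) * u 0 : ℤ) ≤ ((2 * u 1 : ℤ)) := by
        have : (2*(n:ℝ)+3) * (u 0 : ℝ) ≤ 2 * (u 1 : ℝ) := by rw [h0, h1]; nlinarith
        exact_mod_cast this
      exact h
    · have h : (u 2 : ℝ) ≤ 2 * (u 1:ℝ) - (2*(n:ℝ)+3) * (u 0:ℝ) + (r:ℝ) * (u 0:ℝ) := by
        rw [h0, h1, h2]; nlinarith
      exact_mod_cast h
  · rintro ⟨h1, h2, h3, h4⟩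
    have hx0 : (0:ℝ) ≤ (u 0 : ℝ) := by exact_mod_cast h1
    have hz0 : (0:ℝ) ≤ (u 2 : ℝ) := by exact_mod_cast h2
    have h3' : ((2*(n:ℝ)+3)) * (u 0:ℝ) ≤ 2 * (u 1:ℝ) := by exact_mod_cast h3
    have h4' : (u 2:ℝ) ≤ 2 * (u 1:ℝ) - (2*(n:ℝ)+3) * (u 0:ℝ) + (r:ℝ) * (u 0:ℝ) := by
      exact_mod_cast h4
    rcases le_or_gt (u 2) (r * u 0) with hcase | hcase
    · have hc' : (u 2 : ℝ) ≤ (r:ℝ) * (u 0:ℝ) := by exact_mod_cast hcase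
      refine ⟨![ (u 1:ℝ) - (2*(n:ℝ)+3)*(u 0:ℝ)/2, 0,
        (u 0:ℝ)/2 - (u 2:ℝ)/(2*r), (u 2:ℝ)/(2*r)], ?_, ?_⟩
      · intro i
        fin_cases i <;> simp
        · linarith
        · rw [div_le_div_iff₀ hr' (by norm_num : (0:ℝ) < 2)]; nlinarith
        · exact div_nonneg hz0 (le_of_lt hr')
      · funext j
        fin_cases j <;>
          simp [toR, Fin.sum_univ_four, Matrix.vecHead, Matrix.vecTail] <;>
          field_simp <;> ring
    · have hc' : (r:ℝ) * (u 0:ℝ) ≤ (u 2 : ℝ) := by exact_mod_cast le_of_lt hcase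
      refine ⟨![ ((2*(u 1:ℝ) - (u 2:ℝ) + ((r:ℝ)-2*(n:ℝ)-3)*(u 0:ℝ))/2),
        ((u 2:ℝ) - (r:ℝ)*(u 0:ℝ))/2, 0, (u 0:ℝ)/2], ?_, ?_⟩
      · intro i
        fin_cases i <;> simp
        · linarith
        · linarith
        · linarith
      · funext j
        fin_cases j <;>
          simp [toR, Fin.sum_univ_four, Matrix.vecHead, Matrix.vecTail] <;>
          field_simp <;> ring

lemma l_pos (n r : ℤ) (u : Fin 3 → ℤ) (hc : crit n r u) (hu : u ≠ 0) :
    1 ≤ u 1 - (n+1) * u 0 := by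
  obtain ⟨h1, h2, h3, h4⟩ := hc
  by_contra h
  push_neg at h
  have hx : u 0 = 0 := by nlinarith
  rw [hx] at h3 h4 h
  simp only [mul_zero, sub_zero, add_zero] at h3 h4 h
  have hy : u 1 = 0 := by omega
  have hz : u 2 = 0 := by omega
  refine hu ?_
  rw [eta3 u, hx, hy, hz]
  funext j; fin_cases j <;> rfl

lemma crit_cons (n r p q w : ℤ) :
    crit n r ![p, q, w] ↔ (0 ≤ p ∧ 0 ≤ w ∧ (2*n+3) * p ≤ 2*q ∧ w ≤ 2*q - (2*n+3)*p + r*p) := by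
  simp [crit, Matrix.vecHead, Matrix.vecTail]

lemma decomp (n r : ℤ) (hr : 1 ≤ r) (u : Fin 3 → ℤ)
    (hc : crit n r u) (hl : 2 ≤ u 1 - (n+1) * u 0) :
    ∃ a b : Fin 3 → ℤ, crit n r a ∧ crit n r b ∧ u = a + b ∧
      a 1 - (n+1) * a 0 = 1 ∧ b 1 - (n+1) * b 0 = u 1 - (n+1) * u 0 - 1 := by
  obtain ⟨h1, h2, h3, h4⟩ := hc
  have hx3 : u 0 = 0 ∨ u 0 = 1 ∨ 2 ≤ u 0 := by omega
  rcases hx3 with hx | hx | hx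
  · rw [hx] at h3 h4 hl
    rcases le_or_gt (u 2) (2 * u 1 - 2) with hz | hz
    · refine ⟨![0,1,0], ![0, u 1 - 1, u 2], ?_, ?_, ?_, ?_, ?_⟩
      · rw [crit_cons]; omega
      · rw [crit_cons]; omega
      · rw [eta3 u]
        simp [Matrix.cons_add_cons, hx]
      · simp [Matrix.vecHead, Matrix.vecTail]
      · simp [Matrix.vecHead, Matrix.vecTail, hx]; try ring
    · refine ⟨![0,1,2], ![0, u 1 - 1, u 2 - 2], ?_, ?_, ?_, ?_, ?_⟩
      · rw [crit_cons]; omega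
      · rw [crit_cons]; omega
      · rw [eta3 u]
        simp [Matrix.cons_add_cons, hx]
        try omega
      · simp [Matrix.vecHead, Matrix.vecTail]
      · simp [Matrix.vecHead, Matrix.vecTail, hx]; try ring
  · rw [hx] at h3 h4 hl
    have hl' : n + 3 ≤ u 1 := by linarith
    rcases le_or_gt (u 2) (2 * u 1 - 2*n - 4) with hz | hz
    · refine ⟨![1, n+2, 0], ![0, u 1 - (n+2), u 2], ?_, ?_, ?_, ?_, ?_⟩
      · rw [crit_cons]; omega
      · rw [crit_cons]; omega
      · rw [eta3 u]
        simp [Matrix.cons_add_cons, hx]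
        try omega
      · simp [Matrix.vecHead, Matrix.vecTail]; try ring
      · simp [Matrix.vecHead, Matrix.vecTail, hx]; try ring
    · refine ⟨![1, n+2, u 2 - (2 * u 1 - 2*n - 4)], ![0, u 1 - (n+2), 2 * u 1 - 2*n - 4],
        ?_, ?_, ?_, ?_, ?_⟩
      · rw [crit_cons]; omega
      · rw [crit_cons]; omega
      · rw [eta3 u]
        simp [Matrix.cons_add_cons, hx]
        try omega
      · simp [Matrix.vecHead, Matrix.vecTail]; try ring
      · simp [Matrix.vecHead, Matrix.vecTail, hx]; try ring
  · have key : 2 * r + 2 ≤ 2 * u 1 - (2*n+3) * u 0 + r * u 0 := by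
      nlinarith [mul_nonneg (by linarith : (0:ℤ) ≤ r - 1) (by linarith : (0:ℤ) ≤ u 0 - 2)]
    rcases le_or_gt (u 2) (2 * u 1 - (2*n+3) * u 0 + r * u 0 - 2*r) with hz | hz
    · refine ⟨![2, 2*n+3, 0], ![u 0 - 2, u 1 - (2*n+3), u 2], ?_, ?_, ?_, ?_, ?_⟩
      · rw [crit_cons]; refine ⟨by omega, by omega, by nlinarith, by nlinarith⟩
      · rw [crit_cons]; refine ⟨by omega, by omega, by nlinarith, by nlinarith⟩
      · rw [eta3 u]
        simp [Matrix.cons_add_cons]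
        try omega
      · simp [Matrix.vecHead, Matrix.vecTail]; try ring
      · simp [Matrix.vecHead, Matrix.vecTail]; try ring
    · refine ⟨![2, 2*n+3, u 2 - (2 * u 1 - (2*n+3) * u 0 + r * u 0 - 2*r)],
        ![u 0 - 2, u 1 - (2*n+3), 2 * u 1 - (2*n+3) * u 0 + r * u 0 - 2*r], ?_, ?_, ?_, ?_, ?_⟩
      · rw [crit_cons]; refine ⟨by omega, by omega, by nlinarith, by nlinarith⟩
      · rw [crit_cons]; refine ⟨by omega, by omega, by nlinarith, by nlinarith⟩
      · rw [eta3 u]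
        simp [Matrix.cons_add_cons]
        try omega
      · simp [Matrix.vecHead, Matrix.vecTail]; try ring
      · simp [Matrix.vecHead, Matrix.vecTail]; try ring

lemma mem_B_aux (n r : ℤ) (u : Fin 3 → ℤ) (hc : crit n r u) (hl : u 1 - (n+1) * u 0 = 1) :
    u ∈ (({![0, 1, 0], ![0, 1, 1], ![0, 1, 2]} : Set (Fin 3 → ℤ)) ∪
      { u | ∃ j : ℤ, 0 ≤ j ∧ j ≤ r + 1 ∧ u = ![1, n + 2, j] }) ∪
      { u | ∃ j : ℤ, 0 ≤ j ∧ j ≤ 2 * r ∧ u = ![2, 2 * n + 3, j] } := by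
  obtain ⟨h1, h2, h3, h4⟩ := hc
  have hx2 : u 0 ≤ 2 := by nlinarith
  have hx3 : u 0 = 0 ∨ u 0 = 1 ∨ u 0 = 2 := by omega
  rcases hx3 with hx | hx | hx
  · rw [hx] at h3 h4 hl
    simp only [mul_zero, sub_zero, add_zero] at h3 h4 hl
    have hy : u 1 = 1 := hl
    rw [hy] at h4
    left; left
    have hz : u 2 = 0 ∨ u 2 = 1 ∨ u 2 = 2 := by omega
    rw [eta3 u, hx, hy]
    rcases hz with hz | hz | hz <;> rw [hz] <;> simp
  · rw [hx] at h3 h4 hl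
    simp only [mul_one] at h3 h4 hl
    have hy : u 1 = n + 2 := by omega
    left; right
    refine ⟨u 2, h2, by omega, ?_⟩
    conv_lhs => rw [eta3 u]
    rw [hx, hy]
  · rw [hx] at h3 h4 hl
    have hy : u 1 = 2*n + 3 := by omega
    right
    refine ⟨u 2, h2, by omega, ?_⟩
    conv_lhs => rw [eta3 u]
    rw [hx, hy]

/-- the Hilbert basis of the cone
`σ₃ = ⟨(0,1,0),(0,1,2),(2,2n+3,0),(2,2n+3,2r)⟩` of the dual Newton polyhedron of the
`B₍₂ᵣ₋₁,ₙ₎`-singularity is exactly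
`{(0,1,0),(0,1,1),(0,1,2)} ∪ {(1,n+2,j) : 0 ≤ j ≤ r+1} ∪ {(2,2n+3,j) : 0 ≤ j ≤ 2r}`,
and the linear form `l(x,y,z) = y − (n+1)x` takes value `1` on each generator of `σ₃`
and on each element of this Hilbert basis. -/
theorem B_odd_sigma3_hilbert_basis (n r : ℤ) (hn : 2 ≤ n) (hr : 1 ≤ r) :
    let g : Fin 4 → (Fin 3 → ℤ) :=
      ![![0, 1, 0], ![0, 1, 2], ![2, 2 * n + 3, 0], ![2, 2 * n + 3, 2 * r]]
    let S := latticePoints (coneOf g)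
    let B : Set (Fin 3 → ℤ) :=
      ({![0, 1, 0], ![0, 1, 1], ![0, 1, 2]} : Set (Fin 3 → ℤ)) ∪
      { u | ∃ j : ℤ, 0 ≤ j ∧ j ≤ r + 1 ∧ u = ![1, n + 2, j] } ∪
      { u | ∃ j : ℤ, 0 ≤ j ∧ j ≤ 2 * r ∧ u = ![2, 2 * n + 3, j] }
    hilbertBasis S = B ∧
    (∀ i : Fin 4, g i 1 - (n + 1) * g i 0 = 1) ∧
    (∀ u ∈ B, u 1 - (n + 1) * u 0 = 1) := by
  intro g S B
  have hS : ∀ v : Fin 3 → ℤ, v ∈ S ↔ crit n r v := fun v => mem_S_iff n r hr v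
  have hBl : ∀ u ∈ B, u 1 - (n + 1) * u 0 = 1 := by
    intro u hu
    simp only [B, Set.mem_union, Set.mem_insert_iff, Set.mem_singleton_iff,
      Set.mem_setOf_eq] at hu
    rcases hu with ((rfl | rfl | rfl) | ⟨j, hj0, hj1, rfl⟩) | ⟨j, hj0, hj1, rfl⟩ <;>
      simp [Matrix.vecHead, Matrix.vecTail] <;> try ring
  have hBc : ∀ u ∈ B, crit n r u := by
    intro u hu
    simp only [B, Set.mem_union, Set.mem_insert_iff, Set.mem_singleton_iff,
      Set.mem_setOf_eq] at hu
    rcases hu with ((rfl | rfl | rfl) | ⟨j, hj0, hj1, rfl⟩) | ⟨j, hj0, hj1, rfl⟩ <;>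
      rw [crit_cons] <;> omega
  refine ⟨?_, ?_, hBl⟩
  · ext u
    constructor
    · rintro ⟨huS, hu0, hirr⟩
      rw [hS] at huS
      have hl1 : 1 ≤ u 1 - (n+1) * u 0 := l_pos n r u huS hu0
      rcases eq_or_lt_of_le hl1 with heq | hlt
      · exact mem_B_aux n r u huS heq.symm
      · exfalso
        obtain ⟨a, b, ha, hb, hab, hla, hlb⟩ := decomp n r hr u huS (by linarith)
        rcases hirr a b ((hS a).2 ha) ((hS b).2 hb) hab with h | h
        · rw [h] at hla; simp at hla
        · rw [h] at hlb; simp at hlb; omega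
    · intro huB
      refine ⟨(hS u).2 (hBc u huB), ?_, ?_⟩
      · intro h
        have h1 := hBl u huB
        rw [h] at h1; simp at h1
      · intro a b haS hbS hab
        by_contra hcon
        push_neg at hcon
        have hla := l_pos n r a ((hS a).1 haS) hcon.1
        have hlb := l_pos n r b ((hS b).1 hbS) hcon.2
        have h1 := hBl u huB
        rw [hab] at h1
        simp only [Pi.add_apply] at h1
        nlinarith
  · intro i
    fin_cases i <;> simp [g, Matrix.vecHead, Matrix.vecTail] <;> try ring
end
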